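/- arXiv:2111.02593 — 3 statements merged into one kernel-verified Lean document; each statement's English description precedes it below -/
import Mathlib

section
/- Let V ≥ 0 and rmax ≥ 0 be real numbers, and let Q, D, r : ℕ → ℝ satisfy for every t: Q(t+1) = Q(t) - D(t) + r(t), 0 ≤ D(t) ≤ Q(t), r(t) ∈ {0, rmax}, and r(t) = rmax implies Q(t) ≤ V. If 0 ≤ Q(0) ≤ V + rmax, then 0 ≤ Q(t) ≤ V + rmax for all t ∈ ℕ. -/
open Set

theorem queue_update_mem_Icc {V rmax q d a : ℝ} (hrmax : 0 ≤ rmax) (hd : 0 ≤ d ∧ d ≤ q)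
    (ha : a = 0 ∨ a = rmax) (hpol : a = rmax → q ≤ V) (hq : q ∈ Icc 0 (V + rmax)) :
    q - d + a ∈ Icc 0 (V + rmax) := by
  obtain ⟨hd_nonneg, hd_le⟩ := hd
  rcases ha with rfl | rfl
  · constructor <;> linarith [hq.2]
  · have hqV := hpol rfl
    constructor <;> linarith

theorem stmt_5_general (V rmax : ℝ) (hrmax : 0 ≤ rmax)
    (Q D r : ℕ → ℝ)
    (hupd : ∀ t : ℕ, Q (t + 1) = Q t - D t + r t)
    (hD : ∀ t : ℕ, 0 ≤ D t ∧ D t ≤ Q t)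
    (hr : ∀ t : ℕ, r t = 0 ∨ r t = rmax)
    (hpol : ∀ t : ℕ, r t = rmax → Q t ≤ V)
    (h0 : 0 ≤ Q 0 ∧ Q 0 ≤ V + rmax) :
    ∀ t : ℕ, 0 ≤ Q t ∧ Q t ≤ V + rmax := by
  intro t
  induction t with
  | zero => exact h0
  | succ n ih =>
    rw [hupd n]
    exact queue_update_mem_Icc hrmax (hD n) (hr n) (hpol n) ih

/-- Bounded data queue under the threshold-based sensing policy.
If `Q(t+1) = Q(t) - D(t) + r(t)`, `0 ≤ D(t) ≤ Q(t)`, `r(t) ∈ {0, rmax}`, and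
`r(t) = rmax` only when `Q(t) ≤ V`, then `0 ≤ Q(0) ≤ V + rmax` implies
`0 ≤ Q(t) ≤ V + rmax` for all `t`. -/
theorem stmt_5 (V rmax : ℝ) (hV : 0 ≤ V) (hrmax : 0 ≤ rmax)
    (Q D r : ℕ → ℝ)
    (hupd : ∀ t : ℕ, Q (t + 1) = Q t - D t + r t)
    (hD : ∀ t : ℕ, 0 ≤ D t ∧ D t ≤ Q t)
    (hr : ∀ t : ℕ, r t = 0 ∨ r t = rmax)
    (hpol : ∀ t : ℕ, r t = rmax → Q t ≤ V)
    (h0 : 0 ≤ Q 0 ∧ Q 0 ≤ V + rmax) :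
    ∀ t : ℕ, 0 ≤ Q t ∧ Q t ≤ V + rmax :=
  stmt_5_general V rmax hrmax Q D r hupd hD hr hpol h0
end

section
/- Let λ, κ, T, W, φ, γ, τ be positive reals, Q ≥ 0, Q0 ≥ 0, and B̃ < 0. Define U'(f) = 3*λ*κ*T*B̃*f^2 - λ*B̃*T*(ln 2/(W*φ*γ))*2^{Q/(W*τ) - f*T/(W*τ*φ)} + (T/φ)*Q0 for f ≥ 0. Then U' is strictly decreasing on [0, ∞), U'(0) > 0, U'(f) → -∞ as f → ∞, and U' has a unique zero in (0, ∞). -/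
open Filter Set

/-!
Writing `U'(f) = A f² - K 2^(c - s f) + D` with `A = 3λκT B̃ < 0`, `K = λB̃T ln 2/(Wφγ) < 0`,
`s = T/(Wτφ) > 0` and `D = (T/φ) Q0 ≥ 0`, both non-constant terms are decreasing on `[0, ∞)`, the
first one strictly and to `-∞`, while the exponential term stays between `0` and `-K 2^c`.
Hence `U'(0) = -K 2^c + D > 0`, and the intermediate value theorem together with strict
monotonicity gives exactly one positive zero.
-/

theorem existsUnique_pos_eq_zero_of_strictAntiOn {g : ℝ → ℝ} (hcont : Continuous g)
    (hanti : StrictAntiOn g (Ici 0)) (hpos : 0 < g 0) (htend : Tendsto g atTop atBot) :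
    ∃! x : ℝ, 0 < x ∧ g x = 0 := by
  obtain ⟨M, hgM, hM⟩ := ((htend.eventually (eventually_le_atBot 0)).and
    (eventually_ge_atTop 0)).exists
  obtain ⟨x, hx, hgx⟩ := intermediate_value_Icc' hM hcont.continuousOn ⟨hgM, hpos.le⟩
  have hx0 : 0 < x := hx.1.lt_of_ne (by rintro rfl; exact hpos.ne' hgx)
  refine ⟨x, ⟨hx0, hgx⟩, fun y ⟨hy0, hgy⟩ => ?_⟩
  exact hanti.injOn (mem_Ici.mpr hy0.le) (mem_Ici.mpr hx0.le) (hgy.trans hgx.symm)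

noncomputable def quadExpProfile (A K b c s D f : ℝ) : ℝ :=
  A * f ^ 2 - K * b ^ (c - f * s) + D

section quadExpProfile

variable {A K b c s D : ℝ}

theorem strictAntiOn_mul_sq_of_neg (hA : A < 0) : StrictAntiOn (fun f : ℝ => A * f ^ 2) (Ici 0) :=
  fun _ hx _ _ hxy => mul_lt_mul_of_neg_left (pow_lt_pow_left₀ hxy hx two_ne_zero) hA

theorem antitoneOn_neg_mul_rpow_sub (hK : K ≤ 0) (hb : 1 ≤ b) (hs : 0 ≤ s) :
    AntitoneOn (fun f : ℝ => -(K * b ^ (c - f * s))) (Ici 0) := by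
  intro x _ y _ hxy
  have : b ^ (c - y * s) ≤ b ^ (c - x * s) :=
    Real.rpow_le_rpow_of_exponent_le hb (by nlinarith)
  nlinarith

theorem strictAntiOn_quadExpProfile (hA : A < 0) (hK : K ≤ 0) (hb : 1 ≤ b) (hs : 0 ≤ s) :
    StrictAntiOn (quadExpProfile A K b c s D) (Ici 0) := by
  have := ((strictAntiOn_mul_sq_of_neg hA).add_antitone
    (antitoneOn_neg_mul_rpow_sub (c := c) hK hb hs)).add_antitone
    (antitoneOn_const (c := D) (s := Ici (0 : ℝ)))
  unfold quadExpProfile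
  simpa only [sub_eq_add_neg] using this

theorem quadExpProfile_zero_pos (hK : K < 0) (hb : 0 < b) (hD : 0 ≤ D) :
    0 < quadExpProfile A K b c s D 0 := by
  have : 0 < b ^ c := Real.rpow_pos_of_pos hb c
  simp only [quadExpProfile, zero_mul, sub_zero]
  nlinarith

theorem tendsto_quadExpProfile_atBot (hA : A < 0) (hK : K ≤ 0) (hb : 1 ≤ b) (hs : 0 ≤ s) :
    Tendsto (quadExpProfile A K b c s D) atTop atBot := by
  have hquad : Tendsto (fun f : ℝ => A * f ^ 2) atTop atBot :=
    (tendsto_const_mul_atBot_of_neg hA).mpr (tendsto_pow_atTop two_ne_zero)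
  have hbound : ∀ᶠ f : ℝ in atTop, -(K * b ^ (c - f * s)) + D ≤ -(K * b ^ (c - 0 * s)) + D :=
    (eventually_ge_atTop 0).mono fun f hf =>
      add_le_add_left (antitoneOn_neg_mul_rpow_sub hK hb hs self_mem_Ici hf hf) D
  have := tendsto_atBot_add_right_of_ge' _ _ hquad hbound
  unfold quadExpProfile
  simpa only [sub_eq_add_neg, add_assoc] using this

theorem continuous_quadExpProfile (hb : 0 < b) : Continuous (quadExpProfile A K b c s D) := by
  unfold quadExpProfile
  have := Real.continuous_const_rpow (a := b) hb.ne'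
  fun_prop

end quadExpProfile

theorem stmt_13_general (lam κ T W φ γ τ : ℝ) (Q Q0 Btil : ℝ)
    (hlam : 0 < lam) (hκ : 0 < κ) (hT : 0 < T) (hW : 0 < W) (hφ : 0 < φ)
    (hγ : 0 < γ) (hτ : 0 < τ) (hQ0 : 0 ≤ Q0) (hB : Btil < 0) :
    StrictAntiOn
      (fun f : ℝ => 3 * lam * κ * T * Btil * f ^ 2 -
        lam * Btil * T * (Real.log 2 / (W * φ * γ)) *
          (2 : ℝ) ^ (Q / (W * τ) - f * T / (W * τ * φ)) + (T / φ) * Q0)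
      (Set.Ici (0 : ℝ)) ∧
    (0 < 3 * lam * κ * T * Btil * (0 : ℝ) ^ 2 -
        lam * Btil * T * (Real.log 2 / (W * φ * γ)) *
          (2 : ℝ) ^ (Q / (W * τ) - (0 : ℝ) * T / (W * τ * φ)) + (T / φ) * Q0) ∧
    Filter.Tendsto
      (fun f : ℝ => 3 * lam * κ * T * Btil * f ^ 2 -
        lam * Btil * T * (Real.log 2 / (W * φ * γ)) *
          (2 : ℝ) ^ (Q / (W * τ) - f * T / (W * τ * φ)) + (T / φ) * Q0)
      Filter.atTop Filter.atBot ∧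
    (∃! f : ℝ, 0 < f ∧
      3 * lam * κ * T * Btil * f ^ 2 -
        lam * Btil * T * (Real.log 2 / (W * φ * γ)) *
          (2 : ℝ) ^ (Q / (W * τ) - f * T / (W * τ * φ)) + (T / φ) * Q0 = 0) := by
  simp only [mul_div_assoc]
  have hA : 3 * lam * κ * T * Btil < 0 := mul_neg_of_pos_of_neg (by positivity) hB
  have hK : lam * Btil * T * (Real.log 2 / (W * φ * γ)) < 0 :=
    mul_neg_of_neg_of_pos (mul_neg_of_neg_of_pos (mul_neg_of_pos_of_neg hlam hB) hT)
      (by positivity)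
  have hs : 0 ≤ T / (W * τ * φ) := by positivity
  have hanti := strictAntiOn_quadExpProfile (c := Q / (W * τ)) (D := T / φ * Q0)
    hA hK.le one_le_two hs
  have hpos := quadExpProfile_zero_pos (A := 3 * lam * κ * T * Btil) (c := Q / (W * τ))
    (s := T / (W * τ * φ)) hK two_pos (by positivity : 0 ≤ T / φ * Q0)
  have htend := tendsto_quadExpProfile_atBot (c := Q / (W * τ)) (D := T / φ * Q0)
    hA hK.le one_le_two hs
  exact ⟨hanti, hpos, htend, existsUnique_pos_eq_zero_of_strictAntiOn
    (continuous_quadExpProfile two_pos) hanti hpos htend⟩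

/-- The derivative
`U'(f) = 3*λ*κ*T*B̃*f² - λ*B̃*T*(ln 2/(W*φ*γ))*2^{Q/(W*τ) - f*T/(W*τ*φ)} + (T/φ)*Q0`
(with `B̃ < 0`) is strictly decreasing on `[0, ∞)`, positive at `0`, tends to `-∞`
as `f → ∞`, and has a unique zero in `(0, ∞)`. -/
theorem stmt_13 (lam κ T W φ γ τ : ℝ) (Q Q0 Btil : ℝ)
    (hlam : 0 < lam) (hκ : 0 < κ) (hT : 0 < T) (hW : 0 < W) (hφ : 0 < φ)
    (hγ : 0 < γ) (hτ : 0 < τ) (hQ : 0 ≤ Q) (hQ0 : 0 ≤ Q0) (hB : Btil < 0) :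
    StrictAntiOn
      (fun f : ℝ => 3 * lam * κ * T * Btil * f ^ 2 -
        lam * Btil * T * (Real.log 2 / (W * φ * γ)) *
          (2 : ℝ) ^ (Q / (W * τ) - f * T / (W * τ * φ)) + (T / φ) * Q0)
      (Set.Ici (0 : ℝ)) ∧
    (0 < 3 * lam * κ * T * Btil * (0 : ℝ) ^ 2 -
        lam * Btil * T * (Real.log 2 / (W * φ * γ)) *
          (2 : ℝ) ^ (Q / (W * τ) - (0 : ℝ) * T / (W * τ * φ)) + (T / φ) * Q0) ∧
    Filter.Tendsto
      (fun f : ℝ => 3 * lam * κ * T * Btil * f ^ 2 -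
        lam * Btil * T * (Real.log 2 / (W * φ * γ)) *
          (2 : ℝ) ^ (Q / (W * τ) - f * T / (W * τ * φ)) + (T / φ) * Q0)
      Filter.atTop Filter.atBot ∧
    (∃! f : ℝ, 0 < f ∧
      3 * lam * κ * T * Btil * f ^ 2 -
        lam * Btil * T * (Real.log 2 / (W * φ * γ)) *
          (2 : ℝ) ^ (Q / (W * τ) - f * T / (W * τ * φ)) + (T / φ) * Q0 = 0) :=
  stmt_13_general lam κ T W φ γ τ Q Q0 Btil hlam hκ hT hW hφ hγ hτ hQ0 hB
end

section
/- Let G1 : [0, ∞) → ℝ be given by G1(p) = Σ_{i=1}^K w_i*e_i(p) - m*p, where each e_i(p) = (a1_i*p*h_i + a2_i)/(p*h_i + a3_i) - a2_i/a3_i with a3_i > 0, a1_i*a3_i - a2_i ≥ 0, h_i > 0, w_i ≥ 0, m ≥ 0, and let pmax > 0. Then: (a) if m = 0, G1 is nondecreasing on [0, pmax] and p = pmax is a maximizer of G1 over [0, pmax]; (b) if m > 0 and G1'(0) ≤ 0, then p = 0 is a maximizer of G1 over [0, pmax]; (c) if m > 0 and G1'(0) > 0, then G1' has a unique zero p̂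 ∈ (0, ∞), and p = min(p̂, pmax) is a maximizer of G1 over [0, pmax]. -/
/-!
On `[0, ∞)` we have `G1' = F - m`, where the marginal harvest
`F(p) = Σ_i w_i h_i (a1_i a3_i - a2_i) / (p h_i + a3_i)²` is nonnegative, antitone, strictly
antitone as soon as `F(0) > 0`, and tends to `0` at infinity. So `G1` increases as long as
`F ≥ m` and decreases afterwards: throughout when `m = 0`, never when `F(0) ≤ m`, and up to the
unique solution `p̂` of `F(p̂) = m` (given by the intermediate value theorem) when `0 < m < F(0)`.
-/

open Set Filter Topology

/-- The wireless charging objective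
`G1(p) = Σ_i w_i*e_i(p) - m*p` with
`e_i(p) = (a1_i*p*h_i + a2_i)/(p*h_i + a3_i) - a2_i/a3_i`. -/
noncomputable def G1 {K : ℕ} (a1 a2 a3 h w : Fin K → ℝ) (m : ℝ) (p : ℝ) : ℝ :=
  (∑ i : Fin K,
    w i * ((a1 i * p * h i + a2 i) / (p * h i + a3 i) - a2 i / a3 i)) - m * p

section Calculus

variable {f f' : ℝ → ℝ} {a b c : ℝ}

lemma monotoneOn_Icc_of_hasDerivAt_nonneg (hf : ∀ x ∈ Icc a b, HasDerivAt f (f' x) x)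
    (hf' : ∀ x ∈ Ioo a b, 0 ≤ f' x) : MonotoneOn f (Icc a b) :=
  monotoneOn_of_hasDerivWithinAt_nonneg (convex_Icc a b)
    (fun x hx => (hf x hx).continuousAt.continuousWithinAt)
    (fun x hx => (hf x (interior_subset hx)).hasDerivWithinAt)
    (by rwa [interior_Icc])

lemma antitoneOn_Icc_of_hasDerivAt_nonpos (hf : ∀ x ∈ Icc a b, HasDerivAt f (f' x) x)
    (hf' : ∀ x ∈ Ioo a b, f' x ≤ 0) : AntitoneOn f (Icc a b) :=
  antitoneOn_of_hasDerivWithinAt_nonpos (convex_Icc a b)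
    (fun x hx => (hf x hx).continuousAt.continuousWithinAt)
    (fun x hx => (hf x (interior_subset hx)).hasDerivWithinAt)
    (by rwa [interior_Icc])

lemma isMaxOn_Icc_of_hasDerivAt (hab : a ≤ b) (hbc : b ≤ c)
    (hf : ∀ x ∈ Icc a c, HasDerivAt f (f' x) x)
    (hf'_nonneg : ∀ x ∈ Ioo a b, 0 ≤ f' x) (hf'_nonpos : ∀ x ∈ Ioo b c, f' x ≤ 0) :
    IsMaxOn f (Icc a c) b := by
  have hmono := monotoneOn_Icc_of_hasDerivAt_nonneg
    (fun x hx => hf x ⟨hx.1, hx.2.trans hbc⟩) hf'_nonneg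
  have hanti := antitoneOn_Icc_of_hasDerivAt_nonpos
    (fun x hx => hf x ⟨hab.trans hx.1, hx.2⟩) hf'_nonpos
  intro x hx
  rcases le_total x b with hxb | hbx
  · exact hmono ⟨hx.1, hxb⟩ ⟨hab, le_rfl⟩ hxb
  · exact hanti ⟨le_rfl, hbc⟩ ⟨hbx, hx.2⟩ hbx

end Calculus

lemma hasDerivAt_linear_div_linear (a1 a2 a3 h : ℝ) {p : ℝ} (hp : p * h + a3 ≠ 0) :
    HasDerivAt (fun q => (a1 * q * h + a2) / (q * h + a3))
      (h * (a1 * a3 - a2) / (p * h + a3) ^ 2) p := by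
  have hnum : HasDerivAt (fun q => a1 * q * h + a2) (a1 * h) p := by
    simpa using (((hasDerivAt_id p).const_mul a1).mul_const h).add_const a2
  have hden : HasDerivAt (fun q => q * h + a3) h p := by
    simpa using ((hasDerivAt_id p).mul_const h).add_const a3
  exact (hnum.fun_div hden hp).congr_deriv (by ring)

section DecreasingSquare

variable {c h a : ℝ}

lemma antitoneOn_div_sq (hc : 0 ≤ c) (hh : 0 < h) (ha : 0 < a) :
    AntitoneOn (fun p => c / (p * h + a) ^ 2) (Ici 0) := by
  intro p hp q _ hpq
  have : 0 < p * h + a := by nlinarith [mem_Ici.mp hp]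
  dsimp only
  gcongr

lemma strictAntiOn_div_sq (hc : 0 < c) (hh : 0 < h) (ha : 0 < a) :
    StrictAntiOn (fun p => c / (p * h + a) ^ 2) (Ici 0) := by
  intro p hp q _ hpq
  have : 0 < p * h + a := by nlinarith [mem_Ici.mp hp]
  dsimp only
  gcongr

lemma tendsto_div_sq_atTop (c : ℝ) (hh : 0 < h) :
    Tendsto (fun p => c / (p * h + a) ^ 2) atTop (𝓝 0) :=
  tendsto_const_nhds.div_atTop <| (tendsto_pow_atTop two_ne_zero).comp <|
    tendsto_atTop_add_const_right _ a (tendsto_id.atTop_mul_const hh)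

end DecreasingSquare

noncomputable def marginalHarvest {K : ℕ} (a1 a2 a3 h w : Fin K → ℝ) (p : ℝ) : ℝ :=
  ∑ i, w i * (h i * (a1 i * a3 i - a2 i)) / (p * h i + a3 i) ^ 2

section MarginalHarvest

variable {K : ℕ} {a1 a2 a3 h w : Fin K → ℝ}

lemma hasDerivAt_G1 (m : ℝ) (ha3 : ∀ i, 0 < a3 i) (hh : ∀ i, 0 < h i) {p : ℝ} (hp : 0 ≤ p) :
    HasDerivAt (G1 a1 a2 a3 h w m) (marginalHarvest a1 a2 a3 h w p - m) p := by
  have hterm : ∀ i ∈ Finset.univ, HasDerivAt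
      (fun q => w i * ((a1 i * q * h i + a2 i) / (q * h i + a3 i) - a2 i / a3 i))
      (w i * (h i * (a1 i * a3 i - a2 i) / (p * h i + a3 i) ^ 2)) p := fun i _ =>
    ((hasDerivAt_linear_div_linear (a1 i) (a2 i) (a3 i) (h i)
      (by nlinarith [ha3 i, hh i])).sub_const (a2 i / a3 i)).const_mul (w i)
  exact ((HasDerivAt.fun_sum hterm).fun_sub ((hasDerivAt_id p).const_mul m)).congr_deriv
    (by simp [marginalHarvest, mul_div_assoc])

lemma marginalHarvest_nonneg (ha : ∀ i, 0 ≤ a1 i * a3 i - a2 i) (hh : ∀ i, 0 < h i)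
    (hw : ∀ i, 0 ≤ w i) (p : ℝ) : 0 ≤ marginalHarvest a1 a2 a3 h w p :=
  Finset.sum_nonneg fun i _ =>
    div_nonneg (mul_nonneg (hw i) (mul_nonneg (hh i).le (ha i))) (sq_nonneg _)

lemma antitoneOn_marginalHarvest (ha3 : ∀ i, 0 < a3 i) (ha : ∀ i, 0 ≤ a1 i * a3 i - a2 i)
    (hh : ∀ i, 0 < h i) (hw : ∀ i, 0 ≤ w i) :
    AntitoneOn (marginalHarvest a1 a2 a3 h w) (Ici 0) := fun _ hp _ hq hpq =>
  Finset.sum_le_sum fun i _ =>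
    antitoneOn_div_sq (mul_nonneg (hw i) (mul_nonneg (hh i).le (ha i))) (hh i) (ha3 i) hp hq hpq

lemma strictAntiOn_marginalHarvest (ha3 : ∀ i, 0 < a3 i) (ha : ∀ i, 0 ≤ a1 i * a3 i - a2 i)
    (hh : ∀ i, 0 < h i) (hw : ∀ i, 0 ≤ w i) (h0 : 0 < marginalHarvest a1 a2 a3 h w 0) :
    StrictAntiOn (marginalHarvest a1 a2 a3 h w) (Ici 0) := by
  intro p hp q hq hpq
  obtain ⟨j, -, hj⟩ : ∃ j ∈ Finset.univ, 0 < w j * (h j * (a1 j * a3 j - a2 j)) / a3 j ^ 2 :=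
    Finset.exists_lt_of_sum_lt (by simpa [marginalHarvest] using h0)
  have hcj : 0 < w j * (h j * (a1 j * a3 j - a2 j)) :=
    (div_pos_iff_of_pos_right (pow_pos (ha3 j) 2)).mp hj
  refine Finset.sum_lt_sum (fun i _ => antitoneOn_div_sq
    (mul_nonneg (hw i) (mul_nonneg (hh i).le (ha i))) (hh i) (ha3 i) hp hq hpq.le) ?_
  exact ⟨j, Finset.mem_univ j, strictAntiOn_div_sq hcj (hh j) (ha3 j) hp hq hpq⟩

lemma continuousOn_marginalHarvest (ha3 : ∀ i, 0 < a3 i) (hh : ∀ i, 0 < h i) :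
    ContinuousOn (marginalHarvest a1 a2 a3 h w) (Ici 0) := by
  refine continuousOn_finsetSum _ fun i _ => ContinuousOn.div continuousOn_const
    (by fun_prop) fun p hp => ?_
  have : 0 < p * h i + a3 i := by nlinarith [mem_Ici.mp hp, ha3 i, hh i]
  positivity

lemma tendsto_marginalHarvest_atTop (hh : ∀ i, 0 < h i) :
    Tendsto (marginalHarvest a1 a2 a3 h w) atTop (𝓝 0) := by
  have := tendsto_finsetSum (Finset.univ : Finset (Fin K)) fun i _ =>
    tendsto_div_sq_atTop (a := a3 i) (w i * (h i * (a1 i * a3 i - a2 i))) (hh i)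
  rwa [Finset.sum_const_zero] at this

lemma exists_marginalHarvest_eq (ha3 : ∀ i, 0 < a3 i) (hh : ∀ i, 0 < h i) {m : ℝ}
    (hm : 0 < m) (hm0 : m < marginalHarvest a1 a2 a3 h w 0) :
    ∃ p, 0 < p ∧ marginalHarvest a1 a2 a3 h w p = m := by
  obtain ⟨P, hFP, hP⟩ := (((tendsto_marginalHarvest_atTop hh).eventually_lt_const hm).and
    (eventually_gt_atTop 0)).exists
  obtain ⟨p, hp, hFp⟩ := intermediate_value_Icc' hP.le
    ((continuousOn_marginalHarvest ha3 hh).mono fun x hx => hx.1) ⟨hFP.le, hm0.le⟩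
  refine ⟨p, hp.1.lt_of_ne ?_, hFp⟩
  rintro rfl
  exact hm0.ne hFp.symm

end MarginalHarvest

theorem stmt_17_general (K : ℕ)
    (a1 a2 a3 h w : Fin K → ℝ) (m pmax : ℝ)
    (ha3 : ∀ i, 0 < a3 i) (ha : ∀ i, 0 ≤ a1 i * a3 i - a2 i) (hh : ∀ i, 0 < h i)
    (hw : ∀ i, 0 ≤ w i) (hpmax : 0 < pmax) :
    (m = 0 →
      MonotoneOn (G1 a1 a2 a3 h w m) (Set.Icc (0 : ℝ) pmax) ∧
      IsMaxOn (G1 a1 a2 a3 h w m) (Set.Icc (0 : ℝ) pmax) pmax) ∧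
    (0 < m → deriv (G1 a1 a2 a3 h w m) 0 ≤ 0 →
      IsMaxOn (G1 a1 a2 a3 h w m) (Set.Icc (0 : ℝ) pmax) 0) ∧
    (0 < m → 0 < deriv (G1 a1 a2 a3 h w m) 0 →
      ∃ phat : ℝ, 0 < phat ∧ deriv (G1 a1 a2 a3 h w m) phat = 0 ∧
        (∀ q : ℝ, 0 < q → deriv (G1 a1 a2 a3 h w m) q = 0 → q = phat) ∧
        IsMaxOn (G1 a1 a2 a3 h w m) (Set.Icc (0 : ℝ) pmax) (min phat pmax)) := by
  have hG {p : ℝ} (hp : 0 ≤ p) := hasDerivAt_G1 (a1 := a1) (a2 := a2) (w := w) m ha3 hh hp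
  have hG' {p : ℝ} (hp : 0 ≤ p) :
      deriv (G1 a1 a2 a3 h w m) p = marginalHarvest a1 a2 a3 h w p - m :=
    (hG hp).deriv
  have hFanti := antitoneOn_marginalHarvest ha3 ha hh hw
  refine ⟨fun hm => ?_, fun _ hF0 => ?_, fun hm hF0 => ?_⟩
  · have hmono : MonotoneOn (G1 a1 a2 a3 h w m) (Icc 0 pmax) :=
      monotoneOn_Icc_of_hasDerivAt_nonneg (fun p hp => hG hp.1) fun p _ => by
        simpa [hm] using marginalHarvest_nonneg ha hh hw p
    exact ⟨hmono, fun p hp => hmono hp ⟨hpmax.le, le_rfl⟩ hp.2⟩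
  · rw [hG' le_rfl] at hF0
    refine isMaxOn_Icc_of_hasDerivAt le_rfl hpmax.le (fun p hp => hG hp.1)
      (fun p hp => (lt_irrefl p (hp.2.trans hp.1)).elim) fun p hp => ?_
    linarith [hFanti self_mem_Ici (mem_Ici.mpr hp.1.le) hp.1.le]
  · rw [hG' le_rfl, sub_pos] at hF0
    obtain ⟨phat, hphat, hFphat⟩ := exists_marginalHarvest_eq ha3 hh hm hF0
    have hFinj := (strictAntiOn_marginalHarvest ha3 ha hh hw (hm.trans hF0)).injOn
    refine ⟨phat, hphat, by rw [hG' hphat.le, hFphat, sub_self], fun q hq hq0 => ?_, ?_⟩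
    · rw [hG' hq.le, sub_eq_zero, ← hFphat] at hq0
      exact hFinj (mem_Ici.mpr hq.le) (mem_Ici.mpr hphat.le) hq0
    refine isMaxOn_Icc_of_hasDerivAt (le_min hphat.le hpmax.le) (min_le_right _ _)
      (fun p hp => hG hp.1) (fun p hp => ?_) fun p hp => ?_
    · have := hFanti (mem_Ici.mpr hp.1.le) (mem_Ici.mpr hphat.le)
        (hp.2.le.trans (min_le_left _ _))
      linarith
    · have hphat_lt : phat < p := (min_lt_iff.mp hp.1).resolve_right hp.2.not_gt
      have := hFanti (mem_Ici.mpr hphat.le) (mem_Ici.mpr (hphat.trans hphat_lt).le) hphat_lt.le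
      linarith

/-- Threshold structure of the optimal wireless charging power.
(a) if `m = 0`, `G1` is nondecreasing on `[0, pmax]` and `pmax` is a maximizer;
(b) if `m > 0` and `G1'(0) ≤ 0`, then `0` is a maximizer over `[0, pmax]`;
(c) if `m > 0` and `G1'(0) > 0`, then `G1'` has a unique zero `p̂ ∈ (0, ∞)` and
`min(p̂, pmax)` is a maximizer over `[0, pmax]`. -/
theorem stmt_17 (K : ℕ) (hK : 1 ≤ K)
    (a1 a2 a3 h w : Fin K → ℝ) (m pmax : ℝ)
    (ha3 : ∀ i, 0 < a3 i) (ha : ∀ i, 0 ≤ a1 i * a3 i - a2 i) (hh : ∀ i, 0 < h i)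
    (hw : ∀ i, 0 ≤ w i) (hm : 0 ≤ m) (hpmax : 0 < pmax) :
    (m = 0 →
      MonotoneOn (G1 a1 a2 a3 h w m) (Set.Icc (0 : ℝ) pmax) ∧
      IsMaxOn (G1 a1 a2 a3 h w m) (Set.Icc (0 : ℝ) pmax) pmax) ∧
    (0 < m → deriv (G1 a1 a2 a3 h w m) 0 ≤ 0 →
      IsMaxOn (G1 a1 a2 a3 h w m) (Set.Icc (0 : ℝ) pmax) 0) ∧
    (0 < m → 0 < deriv (G1 a1 a2 a3 h w m) 0 →
      ∃ phat : ℝ, 0 < phat ∧ deriv (G1 a1 a2 a3 h w m) phat = 0 ∧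
        (∀ q : ℝ, 0 < q → deriv (G1 a1 a2 a3 h w m) q = 0 → q = phat) ∧
        IsMaxOn (G1 a1 a2 a3 h w m) (Set.Icc (0 : ℝ) pmax) (min phat pmax)) :=
  stmt_17_general K a1 a2 a3 h w m pmax ha3 ha hh hw hpmax
end
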